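/- Suppose n ≥ 2 and set φ = 1/(n−1). Let z be a random vector in {-1,1}^m with law D and define the exposure spread Q(z) = Σ_{i=1}^n (x_i(z) − (1/n) Σ_{j=1}^n x_j(z))². Then E[Q] = ((n−1)/n) · ( Σ_{i=1}^n Var[x_i] − φ Σ_{i≠j} Cov(x_i, x_j) ) + tr( Wᵀ (I_n − (1/n) 𝟏_n 𝟏_nᵀ) W · E[z] E[z]ᵀ ). In particular, the Exposure-Spread objective equals the Exposure-Design objective at φ = 1/(n−1) up to the multiplicative constant (n−1)/n and an additive constant depending only on E[z]. -/

import Mathlib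

open Finset Matrix

/-- The sign map from Booleans to `{-1, 1} ⊆ ℝ`. -/
def sgn (b : Bool) : ℝ := if b then 1 else -1

/-- Expectation of `f` under the (finitely supported) design `D`. -/
noncomputable def pexp {α : Type*} [Fintype α] (D f : α → ℝ) : ℝ :=
  ∑ ω, D ω * f ω

/-- Variance of `f` under the design `D`. -/
noncomputable def pvar {α : Type*} [Fintype α] (D f : α → ℝ) : ℝ :=
  pexp D (fun ω => (f ω - pexp D f) ^ 2)

/-- Covariance of `f` and `g` under the design `D`. -/
noncomputable def pcov {α : Type*} [Fintype α] (D f g : α → ℝ) : ℝ :=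
  pexp D (fun ω => (f ω - pexp D f) * (g ω - pexp D g))

/-!
With `P = I_n − (1/n) 𝟏 𝟏ᵀ` the centering matrix, the spread is the quadratic form
`Q = xᵀ P x`, so `E[Q] = tr(P Σ) + μᵀ P μ`, where `Σ` is the covariance matrix of `x` and
`μ = W E[z]` its mean. Splitting off the diagonal, `tr(P Σ) = Σ Var − (1/n) Σ_{i,j} Cov`
is `(n−1)/n` times the Exposure-Design objective at `φ = 1/(n−1)`, and
`μᵀ P μ = tr(Wᵀ P W E[z] E[z]ᵀ)`.
-/

section Expectation

variable {α : Type*} [Fintype α] (D : α → ℝ)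

lemma pexp_sum {ι : Type*} (s : Finset ι) (f : ι → α → ℝ) :
    pexp D (fun ω => ∑ i ∈ s, f i ω) = ∑ i ∈ s, pexp D (f i) := by
  simp only [pexp, Finset.mul_sum]
  exact Finset.sum_comm

lemma pexp_add (f g : α → ℝ) : pexp D (fun ω => f ω + g ω) = pexp D f + pexp D g := by
  simp only [pexp, mul_add, Finset.sum_add_distrib]

lemma pexp_sub (f g : α → ℝ) : pexp D (fun ω => f ω - g ω) = pexp D f - pexp D g := by
  simp only [pexp, mul_sub, Finset.sum_sub_distrib]

lemma pexp_const_mul (c : ℝ) (f : α → ℝ) : pexp D (fun ω => c * f ω) = c * pexp D f := by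
  simp only [pexp, Finset.mul_sum, mul_left_comm]

variable {D}

lemma pexp_const (hD : ∑ ω, D ω = 1) (c : ℝ) : pexp D (fun _ => c) = c := by
  rw [pexp, ← Finset.sum_mul, hD, one_mul]

lemma pcov_eq_pexp_mul_sub (hD : ∑ ω, D ω = 1) (f g : α → ℝ) :
    pcov D f g = pexp D (fun ω => f ω * g ω) - pexp D f * pexp D g := by
  have hexpand : (fun ω => (f ω - pexp D f) * (g ω - pexp D g))
      = fun ω => (f ω * g ω - (pexp D f * g ω + pexp D g * f ω)) + pexp D f * pexp D g := by
    funext ω; ring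
  rw [pcov, hexpand, pexp_add, pexp_sub, pexp_add, pexp_const_mul, pexp_const_mul,
    pexp_const hD]
  ring

lemma pvar_eq_pcov (f : α → ℝ) : pvar D f = pcov D f f := by
  simp only [pvar, pcov, sq]

lemma dotProduct_mulVec_eq_sum {ι : Type*} [Fintype ι] (A : Matrix ι ι ℝ) (u v : ι → ℝ) :
    u ⬝ᵥ A *ᵥ v = ∑ i, ∑ j, A i j * (u i * v j) := by
  simp only [dotProduct, mulVec, Finset.mul_sum]
  exact Finset.sum_congr rfl fun _ _ => Finset.sum_congr rfl fun _ _ => by ring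

lemma pexp_dotProduct_mulVec {ι : Type*} [Fintype ι] (hD : ∑ ω, D ω = 1)
    (A : Matrix ι ι ℝ) (X : α → ι → ℝ) :
    pexp D (fun ω => X ω ⬝ᵥ A *ᵥ X ω)
      = ∑ i, ∑ j, A i j * pcov D (X · i) (X · j)
        + (fun i => pexp D (X · i)) ⬝ᵥ A *ᵥ (fun i => pexp D (X · i)) := by
  simp only [dotProduct_mulVec_eq_sum, pexp_sum, pexp_const_mul, pcov_eq_pexp_mul_sub hD,
    mul_sub, Finset.sum_sub_distrib]
  ring

end Expectation

noncomputable def centeringMatrix (n : ℕ) : Matrix (Fin n) (Fin n) ℝ :=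
  1 - (1 / n : ℝ) • Matrix.of (fun _ _ => (1 : ℝ))

lemma centeringMatrix_apply {n : ℕ} (i j : Fin n) :
    centeringMatrix n i j = (if i = j then 1 else 0) - 1 / n := by
  simp [centeringMatrix, Matrix.one_apply]

lemma centeringMatrix_mulVec {n : ℕ} (u : Fin n → ℝ) :
    centeringMatrix n *ᵥ u = fun i => u i - (1 / n : ℝ) * ∑ j, u j := by
  ext i
  simp only [mulVec, dotProduct, centeringMatrix_apply, sub_mul, ite_mul, one_mul, zero_mul,
    Finset.sum_sub_distrib, Finset.sum_ite_eq, Finset.mem_univ, if_true, ← Finset.mul_sum]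

lemma sum_sq_sub_mean_eq_dotProduct_centeringMatrix {n : ℕ} (u : Fin n → ℝ) :
    ∑ i, (u i - (1 / n : ℝ) * ∑ j, u j) ^ 2 = u ⬝ᵥ centeringMatrix n *ᵥ u := by
  rcases Nat.eq_zero_or_pos n with rfl | hn
  · simp
  have hn' : (n : ℝ) ≠ 0 := by positivity
  rw [centeringMatrix_mulVec]
  simp only [dotProduct, sub_sq, mul_sub, Finset.sum_add_distrib, Finset.sum_sub_distrib,
    Finset.sum_const, Finset.card_univ, Fintype.card_fin, nsmul_eq_mul, ← Finset.sum_mul,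
    ← Finset.mul_sum]
  field_simp
  ring

lemma sum_sum_centeringMatrix_mul {n : ℕ} (C : Fin n → Fin n → ℝ) :
    ∑ i, ∑ j, centeringMatrix n i j * C i j
      = ∑ i, C i i - (1 / n : ℝ) * ∑ i, ∑ j, C i j := by
  simp only [centeringMatrix_apply, sub_mul, ite_mul, one_mul, zero_mul, Finset.sum_sub_distrib,
    Finset.sum_ite_eq, Finset.mem_univ, if_true, ← Finset.mul_sum]

lemma trace_transpose_mul_mul_vecMulVec {k l : Type*} [Fintype k] [Fintype l]
    (W : Matrix k l ℝ) (P : Matrix k k ℝ) (v : l → ℝ) :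
    trace ((Wᵀ * P * W) * vecMulVec v v) = (W *ᵥ v) ⬝ᵥ P *ᵥ (W *ᵥ v) := by
  rw [mul_vecMulVec, trace_vecMulVec, dotProduct_comm, ← mulVec_mulVec, ← mulVec_mulVec,
    dotProduct_mulVec, vecMul_transpose]

lemma Finset.sum_sum_eq_sum_diag_add_sum_offDiag {ι M : Type*} [Fintype ι] [DecidableEq ι]
    [AddCommMonoid M] (f : ι → ι → M) :
    ∑ i, ∑ j, f i j = ∑ i, f i i + ∑ p ∈ (univ : Finset ι).offDiag, f p.1 p.2 := by
  rw [← Finset.sum_diag univ (fun p => f p.1 p.2), ← Finset.sum_union (disjoint_diag_offDiag _),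
    diag_union_offDiag, ← Finset.sum_product', univ_product_univ]

theorem exposure_spread_eq_exposure_design_general
    (n m : ℕ) (hn : 2 ≤ n)
    (W : Matrix (Fin n) (Fin m) ℝ)
    (D : (Fin m → Bool) → ℝ) (hD1 : ∑ ω, D ω = 1)
    (φ : ℝ) (hφ : φ = 1 / ((n : ℝ) - 1))
    (x : Fin n → (Fin m → Bool) → ℝ)
    (hx : ∀ i ω, x i ω = ∑ j, W i j * sgn (ω j))
    (Q : (Fin m → Bool) → ℝ)
    (hQ : ∀ ω, Q ω = ∑ i, (x i ω - (1 / n : ℝ) * ∑ j, x j ω) ^ 2)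
    (Ez : Fin m → ℝ)
    (hEz : ∀ j, Ez j = pexp D (fun ω => sgn (ω j))) :
    pexp D Q
      = ((n : ℝ) - 1) / n *
          ((∑ i, pvar D (x i))
            - φ * ∑ pr ∈ (Finset.univ : Finset (Fin n)).offDiag,
                pcov D (x pr.1) (x pr.2))
        + Matrix.trace
            ((Wᵀ * ((1 : Matrix (Fin n) (Fin n) ℝ)
                - (1 / n : ℝ) • Matrix.of (fun _ _ => (1 : ℝ))) * W)
              * Matrix.vecMulVec Ez Ez) := by
  have hn1 : (n : ℝ) - 1 ≠ 0 := by
    have : (2 : ℝ) ≤ n := by exact_mod_cast hn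
    linarith
  have hmean : (fun i => pexp D (x i)) = W *ᵥ Ez := by
    ext i
    rw [funext (hx i), pexp_sum]
    simp only [pexp_const_mul, ← hEz, mulVec, dotProduct]
  have hQ_quad : Q = fun ω => (fun i => x i ω) ⬝ᵥ centeringMatrix n *ᵥ (fun i => x i ω) :=
    funext fun ω => (hQ ω).trans (sum_sq_sub_mean_eq_dotProduct_centeringMatrix _)
  rw [hQ_quad, pexp_dotProduct_mulVec hD1, hmean, ← centeringMatrix,
    trace_transpose_mul_mul_vecMulVec, sum_sum_centeringMatrix_mul,
    Finset.sum_sum_eq_sum_diag_add_sum_offDiag]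
  simp only [pvar_eq_pcov, hφ]
  field_simp
  ring

/-- With `n ≥ 2` and `φ = 1/(n−1)`, the expected exposure spread equals
`((n−1)/n)` times the Exposure-Design objective plus the additive constant
`tr(Wᵀ (I_n − (1/n) 𝟏 𝟏ᵀ) W · E[z] E[z]ᵀ)` depending only on `E[z]`. -/
theorem exposure_spread_eq_exposure_design
    (n m : ℕ) (hn : 2 ≤ n) (hm : 0 < m)
    (W : Matrix (Fin n) (Fin m) ℝ)
    (D : (Fin m → Bool) → ℝ) (hD0 : ∀ ω, 0 ≤ D ω) (hD1 : ∑ ω, D ω = 1)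
    (φ : ℝ) (hφ : φ = 1 / ((n : ℝ) - 1))
    (x : Fin n → (Fin m → Bool) → ℝ)
    (hx : ∀ i ω, x i ω = ∑ j, W i j * sgn (ω j))
    (Q : (Fin m → Bool) → ℝ)
    (hQ : ∀ ω, Q ω = ∑ i, (x i ω - (1 / n : ℝ) * ∑ j, x j ω) ^ 2)
    (Ez : Fin m → ℝ)
    (hEz : ∀ j, Ez j = pexp D (fun ω => sgn (ω j))) :
    pexp D Q
      = ((n : ℝ) - 1) / n *
          ((∑ i, pvar D (x i))
            - φ * ∑ pr ∈ (Finset.univ : Finset (Fin n)).offDiag,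
                pcov D (x pr.1) (x pr.2))
        + Matrix.trace
            ((Wᵀ * ((1 : Matrix (Fin n) (Fin n) ℝ)
                - (1 / n : ℝ) • Matrix.of (fun _ _ => (1 : ℝ))) * W)
              * Matrix.vecMulVec Ez Ez) :=
  exposure_spread_eq_exposure_design_general n m hn W D hD1 φ hφ x hx Q hQ Ez hEz
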